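/- arXiv:math/9802008 — 5 statements merged into one kernel-verified Lean document; each statement's English description precedes it below -/
import Mathlib

section
/- Let 0 → B → C → A → 0 be a short exact sequence of abelian groups classified by u ∈ Ext¹(A, B). If the sequence is pure, then for every homomorphism f : A' → A with A' finitely generated, the pullback class f*u ∈ Ext¹(A', B) is zero. -/
open scoped DirectSum

section Aux

variable {B C A : Type} [AddCommGroup B] [AddCommGroup C] [AddCommGroup A]

/-- Every hom `X →+ A` lifts through `p`. -/
def Lifts (p : C →+ A) (X : Type) [AddCommGroup X] : Prop :=
  ∀ f : X →+ A, ∃ g : X →+ C, p.comp g = f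

lemma lifts_of_equiv (p : C →+ A) {X Y : Type} [AddCommGroup X] [AddCommGroup Y]
    (e : X ≃+ Y) (h : Lifts p Y) : Lifts p X := fun f => by
  obtain ⟨g, hg⟩ := h (f.comp e.symm.toAddMonoidHom)
  refine ⟨g.comp e.toAddMonoidHom, AddMonoidHom.ext fun x => ?_⟩
  simpa using DFunLike.congr_fun hg (e x)

lemma lifts_prod (p : C →+ A) {X Y : Type} [AddCommGroup X] [AddCommGroup Y]
    (hX : Lifts p X) (hY : Lifts p Y) : Lifts p (X × Y) := fun f => by
  obtain ⟨g₁, hg₁⟩ := hX (f.comp (AddMonoidHom.inl X Y))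
  obtain ⟨g₂, hg₂⟩ := hY (f.comp (AddMonoidHom.inr X Y))
  refine ⟨g₁.coprod g₂, AddMonoidHom.ext fun xy => ?_⟩
  obtain ⟨x, y⟩ := xy
  have h1 := DFunLike.congr_fun hg₁ x
  have h2 := DFunLike.congr_fun hg₂ y
  simp only [AddMonoidHom.comp_apply, AddMonoidHom.inl_apply, AddMonoidHom.inr_apply] at h1 h2
  show p (g₁ x + g₂ y) = f (x, y)
  rw [map_add, h1, h2, ← map_add]
  congr 1
  simp

lemma lifts_finsupp (p : C →+ A) (hp : Function.Surjective p) (ι : Type) :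
    Lifts p (ι →₀ ℤ) := fun f => by
  choose c hc using fun i : ι => hp (f (Finsupp.single i 1))
  refine ⟨Finsupp.liftAddHom (fun i => zmultiplesHom C (c i)),
    Finsupp.addHom_ext fun i n => ?_⟩
  have hs : n • Finsupp.single i (1 : ℤ) = Finsupp.single i n := by
    rw [Finsupp.smul_single, smul_eq_mul, mul_one]
  rw [AddMonoidHom.comp_apply, Finsupp.liftAddHom_apply_single, zmultiplesHom_apply,
    map_zsmul, hc i, ← map_zsmul, hs]

lemma lifts_zmod (i : B →+ C) (p : C →+ A) (hp : Function.Surjective p)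
    (hex : ∀ c : C, p c = 0 ↔ ∃ b : B, i b = c)
    (hpure : ∀ n : ℕ, 0 < n → ∀ b : B, (∃ c : C, i b = n • c) → ∃ b' : B, b = n • b')
    (q : ℕ) (hq : 0 < q) : Lifts p (ZMod q) := fun f => by
  haveI : NeZero q := ⟨hq.ne'⟩
  obtain ⟨c, hc⟩ := hp (f 1)
  have h0 : p (q • c) = 0 := by
    rw [map_nsmul, hc, ← map_nsmul]
    norm_num
  obtain ⟨b, hb⟩ := (hex _).mp h0
  obtain ⟨b', hb'⟩ := hpure q hq b ⟨c, hb⟩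
  set c' : C := c - i b' with hc'
  have hqc' : (q : ℤ) • c' = 0 := by
    have hib : i b = q • (i b') := by rw [← map_nsmul, ← hb']
    simp only [hc', smul_sub, natCast_zsmul]
    rw [← hb, hib, sub_self]
  have hpc' : p c' = f 1 := by
    have hib' : p (i b') = 0 := (hex (i b')).mpr ⟨b', rfl⟩
    simp [hc', map_sub, hib', hc]
  have hz : (zmultiplesHom C c') (q : ℤ) = 0 := by
    rw [zmultiplesHom_apply]; exact hqc'
  refine ⟨ZMod.lift q ⟨zmultiplesHom C c', hz⟩, AddMonoidHom.ext fun x => ?_⟩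
  obtain ⟨n, rfl⟩ := ZMod.intCast_surjective x
  rw [AddMonoidHom.comp_apply, ZMod.lift_coe, zmultiplesHom_apply, map_zsmul, hpc',
    ← map_zsmul, zsmul_one]

lemma lifts_directSum (p : C →+ A) {ι : Type} [DecidableEq ι] (M : ι → Type)
    [∀ j, AddCommGroup (M j)] (h : ∀ j, Lifts p (M j)) : Lifts p (⨁ j, M j) := fun f => by
  choose g hg using fun j => h j (f.comp (DirectSum.of M j))
  refine ⟨DirectSum.toAddMonoid g, DirectSum.addHom_ext fun j x => ?_⟩
  simpa using DFunLike.congr_fun (hg j) x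

end Aux

/-- If a short exact sequence `0 → B → C → A → 0` of abelian groups is pure, then for
every homomorphism `f : A' → A` with `A'` finitely generated, the pullback of the
extension along `f` splits; equivalently `f` lifts to a homomorphism `A' → C`,
i.e. the pullback class `f*u ∈ Ext¹(A', B)` vanishes. -/
theorem stmt1 {B C A : Type} [AddCommGroup B] [AddCommGroup C] [AddCommGroup A]
    (i : B →+ C) (p : C →+ A) (hi : Function.Injective i) (hp : Function.Surjective p)
    (hex : ∀ c : C, p c = 0 ↔ ∃ b : B, i b = c)
    (hpure : ∀ n : ℕ, 0 < n → ∀ b : B, (∃ c : C, i b = n • c) → ∃ b' : B, b = n • b') :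
    ∀ (A' : Type) [AddCommGroup A'] [AddGroup.FG A'] (f : A' →+ A),
      ∃ g : A' →+ C, p.comp g = f := by
  intro A' _ _ f
  obtain ⟨n, ι, fι, q, hq, e, ⟨eqv⟩⟩ := AddCommGroup.equiv_free_prod_directSum_zmod A'
  haveI : DecidableEq ι := Classical.decEq ι
  have hfree : Lifts p (Fin n →₀ ℤ) := lifts_finsupp p hp (Fin n)
  have htors : Lifts p (⨁ j : ι, ZMod (q j ^ e j)) :=
    lifts_directSum p _ fun j =>
      lifts_zmod i p hp hex hpure (q j ^ e j) (pow_pos (hq j).pos (e j))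
  exact lifts_of_equiv p eqv (lifts_prod p hfree htors) f
end

section
/- Let 0 → B → C → A → 0 be a short exact sequence of abelian groups such that for every homomorphism g : B → B' with B' finite, the pushforward extension of A by B' splits. Then the sequence is pure, i.e. for each n > 0 the map B/nB → C/nC is injective. -/
lemma coe_int_zero (m : ℤ) : ((m : ℚ) : AddCircle (1 : ℚ)) = 0 := by
  rw [AddCircle.coe_eq_zero_iff]
  exact ⟨m, by simp⟩

lemma torsion_finite (n : ℕ) (hn : 0 < n) :
    Finite {y : AddCircle (1 : ℚ) // n • y = 0} := by
  haveI : NeZero n := ⟨hn.ne'⟩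
  have hnq : (n : ℚ) ≠ 0 := by exact_mod_cast hn.ne'
  have key : ∀ q : ℚ, n • ((q : AddCircle (1:ℚ))) = (((n : ℚ) * q : ℚ) : AddCircle (1:ℚ)) := by
    intro q
    rw [← AddCircle.coe_nsmul, nsmul_eq_mul]
  have hsurj : Function.Surjective (fun k : ZMod n =>
      (⟨(((k.val : ℚ) / n : ℚ) : AddCircle (1:ℚ)), by
        rw [key, mul_div_cancel₀ _ hnq]
        exact_mod_cast coe_int_zero (k.val : ℤ)⟩ :
        {y : AddCircle (1 : ℚ) // n • y = 0})) := by
    rintro ⟨y, hy⟩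
    obtain ⟨q, rfl⟩ := QuotientAddGroup.mk_surjective y
    rw [key, AddCircle.coe_eq_zero_iff] at hy
    obtain ⟨m, hm⟩ := hy
    rw [zsmul_eq_mul, mul_one] at hm
    refine ⟨(m : ZMod n), Subtype.ext ?_⟩
    show ((((m : ZMod n).val : ℚ) / n : ℚ) : AddCircle (1:ℚ)) = (q : AddCircle (1:ℚ))
    have hq : q = (m : ℚ) / n := by field_simp [hm]; linarith
    rw [hq, ← sub_eq_zero, ← AddCircle.coe_sub, div_sub_div_same]
    obtain ⟨k, hk⟩ : (n:ℤ) ∣ (((m : ZMod n).val : ℤ) - m) := by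
      have hv := ZMod.val_intCast (n := n) m
      refine ⟨-(m / n), ?_⟩
      have h3 := Int.emod_add_mul_ediv m n
      rw [hv]
      linarith
    have h2 : (((m : ZMod n).val : ℚ) - (m : ℚ)) / n = ((k : ℤ) : ℚ) := by
      have hc : (((m : ZMod n).val : ℚ) - (m : ℚ)) = n * k := by exact_mod_cast hk
      rw [hc]
      field_simp
    rw [h2]
    exact coe_int_zero _
  exact Finite.of_surjective _ hsurj

/-- If `0 → B → C → A → 0` is a short exact sequence of abelian groups such that for
every homomorphism `g : B → B'` with `B'` finite the pushforward extension of `A` by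
`B'` splits (equivalently, `g` extends to a homomorphism `C → B'`), then the sequence
is pure: for each `n > 0` the map `B/nB → C/nC` is injective. -/
theorem stmt4 {B C A : Type} [AddCommGroup B] [AddCommGroup C] [AddCommGroup A]
    (i : B →+ C) (p : C →+ A) (hi : Function.Injective i) (hp : Function.Surjective p)
    (hex : ∀ c : C, p c = 0 ↔ ∃ b : B, i b = c)
    (h : ∀ (B' : Type) [AddCommGroup B'] [Finite B'] (g : B →+ B'),
      ∃ h' : C →+ B', h'.comp i = g) :
    ∀ n : ℕ, 0 < n → ∀ b : B, (∃ c : C, i b = n • c) → ∃ b' : B, b = n • b' := by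
  intro n hn b ⟨c, hc⟩
  by_contra hb
  set N : AddSubgroup B := (n • AddMonoidHom.id B).range with hN
  set M := B ⧸ N with hM
  set π : B →+ M := QuotientAddGroup.mk' N with hπ
  have hπb : π b ≠ 0 := by
    intro h0
    rw [hπ, QuotientAddGroup.mk'_apply, QuotientAddGroup.eq_zero_iff] at h0
    obtain ⟨b', hb'⟩ := h0
    exact hb ⟨b', by simpa using hb'.symm⟩
  have hMn : ∀ x : M, n • x = 0 := by
    intro x
    obtain ⟨y, rfl⟩ := QuotientAddGroup.mk'_surjective N x
    rw [← map_nsmul, QuotientAddGroup.mk'_apply, QuotientAddGroup.eq_zero_iff]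
    exact ⟨y, by simp⟩
  obtain ⟨χ, hχ⟩ := CharacterModule.exists_character_apply_ne_zero_of_ne_zero hπb
  set χ' : M →+ AddCircle (1 : ℚ) := χ with hχ'
  -- the torsion subgroup
  set T : AddSubgroup (AddCircle (1 : ℚ)) :=
    { carrier := {y | n • y = 0}
      add_mem' := by intro a b ha hb; simp only [Set.mem_setOf_eq] at *; rw [smul_add, ha, hb, add_zero]
      zero_mem' := by simp
      neg_mem' := by intro a ha; simp only [Set.mem_setOf_eq] at *; rw [smul_neg, ha, neg_zero] } with hT
  haveI : Finite T := by
    have := torsion_finite n hn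
    exact Finite.of_injective (fun x : T => (⟨x.1, x.2⟩ : {y : AddCircle (1:ℚ) // n • y = 0}))
      (fun a b hab => Subtype.ext (congrArg Subtype.val hab))
  have hmem : ∀ x : B, χ' (π x) ∈ T := by
    intro x
    show n • χ' (π x) = 0
    rw [← map_nsmul, hMn, map_zero]
  set g : B →+ T := AddMonoidHom.codRestrict (χ'.comp π) T hmem with hg
  obtain ⟨h', hh'⟩ := h T g
  have h1 : g b = h' (i b) := by rw [← hh']; rfl
  have h2 : h' (i b) = n • h' c := by rw [hc, map_nsmul]
  have h3 : n • h' c = 0 := by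
    apply Subtype.ext
    show ((n • h' c : T) : AddCircle (1:ℚ)) = 0
    rw [AddSubgroup.coe_nsmul]
    exact (h' c).2
  have : χ' (π b) = 0 := by
    have := h1.trans (h2.trans h3)
    exact congrArg Subtype.val this
  exact hχ this
end

section
/- If A is an abelian group with nA = 0 for some positive integer n (i.e. A has bounded exponent), then PExt(A, B) = 0 for every abelian group B. -/
/-- Key arithmetic lemma: if `g` has order `k` and `k` kills the whole group, then the
cyclic subgroup generated by `g` is pure: `j • g ∈ m • G` implies `j • g ∈ m • ⟨g⟩`. -/
lemma stmt6_key {G : Type*} [AddCommGroup G] (g : G) (k : ℕ) (hk : k ≠ 0)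
    (hord : ∀ j : ℤ, j • g = 0 → (k : ℤ) ∣ j)
    (hexp : ∀ x : G, k • x = 0) (j : ℤ) (m : ℕ) (y : G) (h : j • g = m • y) :
    ∃ t : ℤ, j • g = ((m : ℤ) * t) • g := by
  obtain ⟨k', hk'⟩ : Nat.gcd m k ∣ k := Nat.gcd_dvd_right m k
  obtain ⟨m', hm'⟩ : Nat.gcd m k ∣ m := Nat.gcd_dvd_left m k
  have hk'0 : k' ≠ 0 := by rintro rfl; exact hk (by simpa using hk')
  have e1 : k' • (j • g) = (k' * m) • y := by rw [h, smul_smul]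
  have hcomm : k' * m = m' * k := by
    have h1 : k' * m = k' * (Nat.gcd m k * m') := by rw [← hm']
    have h2 : m' * k = m' * (Nat.gcd m k * k') := by rw [← hk']
    rw [h1, h2]; ring
  have e2 : (k' * m) • y = (0 : G) := by
    rw [hcomm, mul_smul, hexp, smul_zero]
  have h1 : ((k' : ℤ) * j) • g = 0 := by
    rw [mul_smul, natCast_zsmul, e1, e2]
  have h2 : (k : ℤ) ∣ (k' : ℤ) * j := hord _ h1
  have hcast : (k : ℤ) = (k' : ℤ) * (Nat.gcd m k : ℤ) := by
    conv_lhs => rw [hk']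
    push_cast; ring
  have h3 : ((Nat.gcd m k : ℤ)) ∣ j := by
    have h2' : (k' : ℤ) * (Nat.gcd m k : ℤ) ∣ (k' : ℤ) * j := by rw [← hcast]; exact h2
    exact (mul_dvd_mul_iff_left (by exact_mod_cast hk'0 : (k' : ℤ) ≠ 0)).mp h2'
  obtain ⟨w, hw⟩ := h3
  have hbez : (Nat.gcd m k : ℤ) = m * Nat.gcdA m k + k * Nat.gcdB m k := Nat.gcd_eq_gcd_ab m k
  refine ⟨Nat.gcdA m k * w, ?_⟩
  have hkg : (k : ℤ) • g = 0 := by rw [natCast_zsmul]; exact hexp g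
  have harith : (m : ℤ) * (Nat.gcdA m k * w) = j + (-(Nat.gcdB m k * w)) * (k : ℤ) := by
    rw [hw]; linear_combination (-w) * hbez
  calc j • g = j • g + (-(Nat.gcdB m k * w)) • ((k : ℤ) • g) := by rw [hkg, smul_zero, add_zero]
    _ = (j + (-(Nat.gcdB m k * w)) * (k : ℤ)) • g := by rw [add_zsmul, mul_smul]
    _ = ((m : ℤ) * (Nat.gcdA m k * w)) • g := by rw [harith]

/-- If `A` is an abelian group of bounded exponent (`n • A = 0` for some `n > 0`), then
`PExt(A, B) = 0` for every abelian group `B`: every pure short exact sequence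
`0 → B → C → A → 0` splits. -/
theorem stmt6 {A : Type} [AddCommGroup A] {n : ℕ} (hn : 0 < n) (hA : ∀ a : A, n • a = 0)
    {B C : Type} [AddCommGroup B] [AddCommGroup C]
    (i : B →+ C) (p : C →+ A) (hi : Function.Injective i) (hp : Function.Surjective p)
    (hex : ∀ c : C, p c = 0 ↔ ∃ b : B, i b = c)
    (hpure : ∀ m : ℕ, 0 < m → ∀ b : B, (∃ c : C, i b = m • c) → ∃ b' : B, b = m • b') :
    ∃ s : A →+ C, p.comp s = AddMonoidHom.id A := by
  classical
  set fst : A × C →+ A := AddMonoidHom.fst A C with hfst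
  -- "good" subgroups of `A × C`: graphs of partial sections with pure domain
  set Good : Set (AddSubgroup (A × C)) :=
    {D | (∀ q ∈ D, p q.2 = q.1) ∧ (∀ c : C, ((0 : A), c) ∈ D → c = 0) ∧
      ∀ m : ℕ, ∀ x ∈ D.map fst, (∃ y : A, m • y = x) → ∃ z ∈ D.map fst, m • z = x} with hGood
  have hbot : (⊥ : AddSubgroup (A × C)) ∈ Good := by
    refine ⟨?_, ?_, ?_⟩
    · intro q hq
      rw [AddSubgroup.mem_bot] at hq
      rw [hq]; simp
    · intro c hc
      rw [AddSubgroup.mem_bot] at hc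
      exact congrArg Prod.snd hc
    · intro m x hx _
      refine ⟨x, hx, ?_⟩
      obtain ⟨q, hq, rfl⟩ := hx
      have hq' : q = 0 := by simpa using hq
      rw [hq']; simp
  obtain ⟨D, hDmax⟩ := zorn_le₀ Good (by
    intro c hcsub hchain
    rcases c.eq_empty_or_nonempty with rfl | hne
    · exact ⟨⊥, hbot, by simp⟩
    · refine ⟨sSup c, ?_, fun z hz => le_sSup hz⟩
      have hmem : ∀ q : A × C, q ∈ sSup c ↔ ∃ E ∈ c, q ∈ E := fun q =>
        AddSubgroup.mem_sSup_of_directedOn hne hchain.directedOn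
      refine ⟨?_, ?_, ?_⟩
      · intro q hq
        obtain ⟨E, hEc, hqE⟩ := (hmem q).1 hq
        exact (hcsub hEc).1 q hqE
      · intro c' hc'
        obtain ⟨E, hEc, hqE⟩ := (hmem _).1 hc'
        exact (hcsub hEc).2.1 c' hqE
      · intro m x hx hx2
        obtain ⟨q, hq, rfl⟩ := hx
        obtain ⟨E, hEc, hqE⟩ := (hmem q).1 hq
        obtain ⟨z, hz, hzx⟩ := (hcsub hEc).2.2 m (fst q) ⟨q, hqE, rfl⟩ hx2
        exact ⟨z, AddSubgroup.map_mono (le_sSup hEc) hz, hzx⟩)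
  have hDGood : D ∈ Good := hDmax.1
  obtain ⟨hD1, hD2, hD3⟩ := hDGood
  set S : AddSubgroup A := D.map fst with hSdef
  by_cases hS : S = ⊤
  · -- the maximal graph is total: extract the section
    have huniq : ∀ (a : A) (c₁ c₂ : C), (a, c₁) ∈ D → (a, c₂) ∈ D → c₁ = c₂ := by
      intro a c₁ c₂ h1 h2
      have hsub : ((0 : A), c₁ - c₂) ∈ D := by
        have := D.sub_mem h1 h2
        simpa using this
      exact sub_eq_zero.mp (hD2 _ hsub)
    have hex3 : ∀ a : A, ∃ c : C, (a, c) ∈ D := by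
      intro a
      have ha : a ∈ S := by rw [hS]; trivial
      obtain ⟨q, hq, hfq⟩ := ha
      refine ⟨q.2, ?_⟩
      have : q = (a, q.2) := Prod.ext hfq rfl
      rwa [this] at hq
    choose F hF using hex3
    refine ⟨{ toFun := F,
              map_zero' := huniq 0 _ 0 (hF 0) (zero_mem D),
              map_add' := fun a b => huniq _ _ _ (hF (a + b)) (D.add_mem (hF a) (hF b)) }, ?_⟩
    ext a
    exact hD1 (a, F a) (hF a)
  · -- otherwise we can extend the maximal graph: contradiction
    exfalso
    set mk : A →+ A ⧸ S := QuotientAddGroup.mk' S with hmk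
    have hmk0 : ∀ a : A, mk a = 0 ↔ a ∈ S := fun a => QuotientAddGroup.eq_zero_iff a
    have hnG : ∀ g : A ⧸ S, n • g = 0 := by
      intro g
      obtain ⟨a, rfl⟩ := QuotientAddGroup.mk'_surjective S g
      rw [← map_nsmul, hA, map_zero]
    have hEE : AddMonoid.ExponentExists (A ⧸ S) := ⟨n, hn, hnG⟩
    obtain ⟨gbar, hgbar⟩ := AddMonoid.exists_addOrderOf_eq_exponent hEE
    set k : ℕ := AddMonoid.exponent (A ⧸ S) with hkdef
    have hk0 : k ≠ 0 := hEE.exponent_ne_zero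
    have hkx : ∀ x : A ⧸ S, k • x = 0 := fun x => AddMonoid.exponent_nsmul_eq_zero x
    have hk1 : k ≠ 1 := by
      intro h1
      apply hS
      rw [AddSubgroup.eq_top_iff']
      intro a
      have := hkx (mk a)
      rw [h1, one_nsmul] at this
      exact (hmk0 a).mp this
    have hord : ∀ j : ℤ, j • gbar = 0 → (k : ℤ) ∣ j := by
      intro j hj
      rw [← hgbar]
      exact addOrderOf_dvd_iff_zsmul_eq_zero.mpr hj
    -- pick a representative `a` of `gbar` with `k • a = 0`, using purity of `S`
    obtain ⟨a₀, ha₀⟩ := QuotientAddGroup.mk'_surjective S gbar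
    have ha₀' : mk a₀ = gbar := ha₀
    have hka₀ : k • a₀ ∈ S := by
      refine (hmk0 _).mp ?_
      rw [map_nsmul, ha₀']
      exact hkx gbar
    obtain ⟨z, hzS, hzz⟩ := hD3 k (k • a₀) hka₀ ⟨a₀, rfl⟩
    set a : A := a₀ - z with hadef
    have hmka : mk a = gbar := by
      rw [hadef, map_sub, (hmk0 z).mpr hzS, sub_zero]
      exact ha₀
    have hka : k • a = 0 := by rw [hadef, smul_sub, hzz, sub_self]
    -- pick a matching element `cNew` of `C` with `p cNew = a` and `k • cNew = 0`
    obtain ⟨c₀, hc₀⟩ := hp a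
    have hpk : p (k • c₀) = 0 := by rw [map_nsmul, hc₀, hka]
    obtain ⟨b, hb⟩ := (hex _).mp hpk
    obtain ⟨b', hb'⟩ := hpure k (Nat.pos_of_ne_zero hk0) b ⟨c₀, hb⟩
    set cNew : C := c₀ - i b' with hcdef
    have hpc : p cNew = a := by
      rw [hcdef, map_sub, hc₀, (hex (i b')).mpr ⟨b', rfl⟩, sub_zero]
    have hkc : k • cNew = 0 := by
      rw [hcdef, smul_sub, ← map_nsmul, ← hb', hb, sub_self]
    -- the extended graph
    set v : A × C := (a, cNew) with hvdef
    set D' : AddSubgroup (A × C) := D ⊔ AddSubgroup.closure {v} with hD'def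
    have hvD' : v ∈ D' := by
      apply AddSubgroup.mem_sup_right
      exact AddSubgroup.mem_closure_singleton.mpr ⟨1, one_zsmul v⟩
    have hmemD' : ∀ q : A × C, q ∈ D' ↔ ∃ d ∈ D, ∃ jj : ℤ, d + jj • v = q := by
      intro q
      rw [hD'def, AddSubgroup.mem_sup]
      constructor
      · rintro ⟨y, hy, z, hz, rfl⟩
        obtain ⟨jj, rfl⟩ := AddSubgroup.mem_closure_singleton.mp hz
        exact ⟨y, hy, jj, rfl⟩
      · rintro ⟨d, hd, jj, rfl⟩
        exact ⟨d, hd, jj • v, AddSubgroup.mem_closure_singleton.mpr ⟨jj, rfl⟩, rfl⟩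
    -- auxiliary: multiples of k kill both a and cNew
    have hkza : ∀ jj : ℤ, (k : ℤ) ∣ jj → jj • a = 0 ∧ jj • cNew = 0 := by
      rintro jj ⟨w, rfl⟩
      constructor
      · rw [mul_comm, mul_smul, natCast_zsmul, hka, smul_zero]
      · rw [mul_comm, mul_smul, natCast_zsmul, hkc, smul_zero]
    have hD'Good : D' ∈ Good := by
      refine ⟨?_, ?_, ?_⟩
      · intro q hq
        obtain ⟨d, hd, jj, rfl⟩ := (hmemD' q).1 hq
        have : (d + jj • v).2 = d.2 + jj • cNew := rfl
        rw [this, map_add, hD1 d hd, map_zsmul, hpc]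
        rfl
      · intro c' hc'
        obtain ⟨d, hd, jj, heq⟩ := (hmemD' _).1 hc'
        have h1 : d.1 + jj • a = 0 := congrArg Prod.fst heq
        have h2 : d.2 + jj • cNew = c' := congrArg Prod.snd heq
        have hd1S : d.1 ∈ S := ⟨d, hd, rfl⟩
        have hjj : jj • gbar = 0 := by
          have := congrArg mk h1
          rw [map_add, map_zsmul, (hmk0 _).mpr hd1S, hmka, zero_add, map_zero] at this
          exact this
        obtain ⟨hja, hjc⟩ := hkza jj (hord jj hjj)
        rw [hja, add_zero] at h1
        rw [hjc, add_zero] at h2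
        have : ((0 : A), d.2) ∈ D := by
          have : d = (d.1, d.2) := rfl
          rw [this, h1] at hd
          exact hd
        rw [← h2]
        exact hD2 _ this
      · -- purity of the extended domain
        intro m x hx hex2
        obtain ⟨y, hy⟩ := hex2
        obtain ⟨q, hq, rfl⟩ := hx
        obtain ⟨d, hd, jj, rfl⟩ := (hmemD' q).1 hq
        have hd1S : d.1 ∈ S := ⟨d, hd, rfl⟩
        have hfstq : fst (d + jj • v) = d.1 + jj • a := rfl
        rw [hfstq] at hy ⊢
        -- pass to the quotient
        have hmkx : jj • gbar = m • (mk y) := by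
          have := congrArg mk hy
          rw [map_nsmul, map_add, map_zsmul, (hmk0 _).mpr hd1S, hmka, zero_add] at this
          exact this.symm
        obtain ⟨t, ht⟩ := stmt6_key gbar k hk0 hord hkx jj m (mk y) hmkx
        -- x - m • (t • a) lies in S and in m • A
        have hx'S : d.1 + jj • a - m • (t • a) ∈ S := by
          refine (hmk0 _).mp ?_
          rw [map_sub, map_add, map_zsmul, map_nsmul, map_zsmul,
            (hmk0 _).mpr hd1S, hmka, zero_add, ht]
          rw [mul_smul, natCast_zsmul, sub_self]
        obtain ⟨z₂, hz₂S, hz₂⟩ := hD3 m _ hx'S ⟨y - t • a, by rw [smul_sub, ← hy]⟩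
        refine ⟨z₂ + t • a, ?_, ?_⟩
        · -- z₂ + t • a belongs to the new domain
          obtain ⟨d₂, hd₂, hd₂1⟩ := hz₂S
          have hd₂' : d₂ ∈ D := hd₂
          have hd₂1' : d₂.1 = z₂ := hd₂1
          refine ⟨d₂ + t • v, (hmemD' _).mpr ⟨d₂, hd₂', t, rfl⟩, ?_⟩
          have hthis : fst (d₂ + t • v) = d₂.1 + t • a := rfl
          rw [hthis, hd₂1']
        · rw [smul_add, hz₂, sub_add_cancel]
    -- contradiction with maximality
    have hD'le : D' ≤ D := hDmax.2 hD'Good le_sup_left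
    have haS : a ∈ S := ⟨v, hD'le hvD', rfl⟩
    have : gbar = 0 := by rw [← hmka, (hmk0 a).mpr haS]
    rw [this, addOrderOf_zero] at hgbar
    exact hk1 hgbar.symm
end

section
/- The element of the cokernel C of ⊕_{k∈ℕ}ℤ → ∏_{k∈ℕ}ℤ represented by the sequence (2^k)_{k∈ℕ} is nonzero and divisible by 2^n for every n. -/
/-- The subgroup `⊕_{k∈ℕ} ℤ` of finitely supported sequences inside `∏_{k∈ℕ} ℤ`. -/
def finSupp : AddSubgroup (ℕ → ℤ) where
  carrier := {x | (Function.support x).Finite}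
  zero_mem' := by simp [Function.support_zero]
  add_mem' := by
    intro a b ha hb
    exact ((ha.union hb).subset (Function.support_add a b))
  neg_mem' := by
    intro a ha
    simpa [Function.support_neg] using ha

/-- In the cokernel `C = (∏_{k∈ℕ} ℤ)/(⊕_{k∈ℕ} ℤ)`, the element represented by the
sequence `(2^k)_{k∈ℕ}` is nonzero and divisible by `2^n` for every `n`. -/
theorem stmt10 :
    ((fun k : ℕ => (2 : ℤ) ^ k : ℕ → ℤ) : (ℕ → ℤ) ⧸ finSupp) ≠ 0 ∧
    ∀ n : ℕ, ∃ y : (ℕ → ℤ) ⧸ finSupp,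
      ((fun k : ℕ => (2 : ℤ) ^ k : ℕ → ℤ) : (ℕ → ℤ) ⧸ finSupp) = (2 ^ n : ℤ) • y := by
  constructor
  · intro h
    rw [QuotientAddGroup.eq_zero_iff] at h
    have : Function.support (fun k : ℕ => (2 : ℤ) ^ k) = Set.univ := by
      ext k; simp [pow_ne_zero]
    have hfin : (Function.support (fun k : ℕ => (2 : ℤ) ^ k)).Finite := h
    rw [this] at hfin
    exact Set.infinite_univ hfin
  · intro n
    refine ⟨((fun k : ℕ => (2 : ℤ) ^ (k - n) : ℕ → ℤ) : (ℕ → ℤ) ⧸ finSupp), ?_⟩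
    rw [← QuotientAddGroup.mk_zsmul, QuotientAddGroup.eq]
    have : Function.support (-(fun k : ℕ => (2 : ℤ) ^ k) +
        (2 ^ n : ℤ) • (fun k : ℕ => (2 : ℤ) ^ (k - n))) ⊆ ↑(Finset.range n) := by
      intro k hk
      simp only [Function.mem_support, Pi.add_apply, Pi.neg_apply, Pi.smul_apply,
        smul_eq_mul] at hk
      by_contra hkn
      simp only [Finset.coe_range, Set.mem_Iio, not_lt] at hkn
      apply hk
      rw [← pow_add, Nat.add_sub_cancel' hkn]
      ring
    exact Set.Finite.subset (Finset.range n).finite_toSet this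
end

section
/- Let p be a prime. The quotient group (∏_{k∈ℕ} ℤ_p) / { b ∈ ∏_k ℤ_p | the p-adic valuation v(b_k) tends to infinity } is nonzero and torsion-free, where ℤ_p denotes the p-adic integers. -/
noncomputable def valTendsToInfty (p : ℕ) [Fact p.Prime] : AddSubgroup (ℕ → PadicInt p) where
  carrier := {b | ∀ m : ℕ, ∃ N : ℕ, ∀ k ≥ N, (p : PadicInt p) ^ m ∣ b k}
  zero_mem' := fun m => ⟨0, fun k _ => dvd_zero _⟩
  add_mem' := by
    rintro a b ha hb m
    obtain ⟨Na, hNa⟩ := ha m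
    obtain ⟨Nb, hNb⟩ := hb m
    exact ⟨max Na Nb, fun k hk =>
      dvd_add (hNa k (le_trans (le_max_left _ _) hk)) (hNb k (le_trans (le_max_right _ _) hk))⟩
  neg_mem' := by
    rintro a ha m
    obtain ⟨N, hN⟩ := ha m
    exact ⟨N, fun k hk => (dvd_neg).2 (hN k hk)⟩

/-- The quotient `(∏_{k∈ℕ} ℤ_p) / {b | v(b_k) → ∞}` is nonzero and torsion-free. -/
theorem stmt16 (p : ℕ) [Fact p.Prime] :
    (∃ x : (ℕ → PadicInt p) ⧸ valTendsToInfty p, x ≠ 0) ∧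
    (∀ (x : (ℕ → PadicInt p) ⧸ valTendsToInfty p) (n : ℕ), 0 < n → n • x = 0 → x = 0) := by
  have hp : p.Prime := Fact.out
  constructor
  · refine ⟨QuotientAddGroup.mk (fun _ => 1), ?_⟩
    rw [Ne, QuotientAddGroup.eq_zero_iff]
    intro h
    obtain ⟨N, hN⟩ := h 1
    have h1 : (p : PadicInt p) ^ 1 ∣ 1 := hN N le_rfl
    rw [pow_one] at h1
    have : IsUnit (p : PadicInt p) := isUnit_of_dvd_one h1
    rw [PadicInt.isUnit_iff, PadicInt.norm_p] at this
    have hp1 : (p : ℝ) = 1 := inv_eq_one.mp this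
    have : p = 1 := by exact_mod_cast hp1
    exact hp.one_lt.ne' this
  · intro x n hn hx
    induction x using QuotientAddGroup.induction_on with
    | H b =>
      rw [← QuotientAddGroup.mk_nsmul, QuotientAddGroup.eq_zero_iff] at hx
      rw [QuotientAddGroup.eq_zero_iff]
      -- n = p^e * u with ¬ p ∣ u
      set e := n.factorization p with he
      have hord : p ^ e * (n / p ^ e) = n := Nat.ordProj_mul_ordCompl_eq_self n p
      have hnd : ¬ p ∣ (n / p ^ e) := Nat.not_dvd_ordCompl hp hn.ne'
      have hu : IsUnit ((n / p ^ e : ℕ) : PadicInt p) := by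
        rw [PadicInt.isUnit_iff]
        refine le_antisymm (PadicInt.norm_le_one _) ?_
        by_contra h
        push_neg at h
        rw [show ((n / p ^ e : ℕ) : PadicInt p) = (((n / p ^ e : ℕ) : ℤ) : PadicInt p) by norm_cast,
          PadicInt.norm_int_lt_one_iff_dvd] at h
        exact hnd (by exact_mod_cast h)
      intro m
      obtain ⟨N, hN⟩ := hx (m + e)
      refine ⟨N, fun k hk => ?_⟩
      have h1 := hN k hk
      have h2 : (p : PadicInt p) ^ (m + e) ∣ (n : PadicInt p) * b k := by
        simpa [Pi.smul_apply, nsmul_eq_mul] using h1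
      rw [← hord] at h2
      push_cast at h2
      have h3 : (p : PadicInt p) ^ m * (p : PadicInt p) ^ e ∣
          (p : PadicInt p) ^ e * (((n / p ^ e : ℕ) : PadicInt p) * b k) := by
        rw [← pow_add]
        convert h2 using 1
        ring
      have hpne : (p : PadicInt p) ^ e ≠ 0 := by
        apply pow_ne_zero
        exact_mod_cast (Nat.cast_ne_zero.mpr hp.ne_zero : (p : PadicInt p) ≠ 0)
      have h4 : (p : PadicInt p) ^ m ∣ ((n / p ^ e : ℕ) : PadicInt p) * b k := by
        rcases h3 with ⟨c, hc⟩
        refine ⟨c, ?_⟩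
        apply mul_left_cancel₀ hpne
        rw [hc]; ring
      exact hu.dvd_mul_left.mp h4
end
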